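/- The rule GlobalProp is Pigou-Dalton consistent. -/

import Mathlib

open Finset

/-- An instance `I = (N, C, w)`: a finite nonempty set of users `N`, a finite set of
artists `C`, and nonnegative real engagement weights `w i j` (supported on
`users × artists`), such that every user has positive total engagement. -/
structure Inst where
  users : Finset ℕ
  artists : Finset ℕ
  w : ℕ → ℕ → ℝ
  users_nonempty : users.Nonempty
  w_nonneg : ∀ i j, 0 ≤ w i j
  w_supp : ∀ i j, w i j ≠ 0 → i ∈ users ∧ j ∈ artists
  w_pos : ∀ i ∈ users, 0 < ∑ j ∈ artists, w i j

/-- `φ` is a payment rule (with revenue share `α`) on the class of instances satisfying `P`: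
payments to artists are nonnegative and total `α·|N|`. -/
def IsRuleOn (P : Inst → Prop) (α : ℝ) (φ : Inst → ℕ → ℝ) : Prop :=
  ∀ I : Inst, P I →
    (∀ j ∈ I.artists, 0 ≤ φ I j) ∧ (∑ j ∈ I.artists, φ I j) = α * I.users.card

/-- `φ` is a payment rule (with revenue share `α`). -/
abbrev IsRule (α : ℝ) (φ : Inst → ℕ → ℝ) : Prop := IsRuleOn (fun _ => True) α φ

/-- Fraud-proofness, relative to a class `P` of instances: for instances
`I = (N \ N̂, C, w)` and `I' = (N, C, w')` agreeing on the genuine users `N \ N̂`,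
and any coalition `Ĉ ⊆ C`, the gain `φ_{I'}(Ĉ) − φ_I(Ĉ)` is at most `|N̂|`. -/
def FraudProofOn (P : Inst → Prop) (φ : Inst → ℕ → ℝ) : Prop :=
  ∀ I I' : Inst, P I → P I' →
    ∀ Nhat : Finset ℕ, Nhat ⊆ I'.users → I.users = I'.users \ Nhat →
      I.artists = I'.artists →
      (∀ i ∈ I.users, ∀ j ∈ I.artists, I.w i j = I'.w i j) →
      ∀ Chat ⊆ I.artists,
        (∑ j ∈ Chat, φ I' j) - (∑ j ∈ Chat, φ I j) ≤ (Nhat.card : ℝ)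

/-- Fraud-proofness. -/
abbrev FraudProof (φ : Inst → ℕ → ℝ) : Prop := FraudProofOn (fun _ => True) φ

/-- Single-user fraud-proofness: fraud-proofness restricted to `|N̂| = 1`. -/
def SingleFraudProof (φ : Inst → ℕ → ℝ) : Prop :=
  ∀ I I' : Inst,
    ∀ Nhat : Finset ℕ, Nhat.card = 1 → Nhat ⊆ I'.users → I.users = I'.users \ Nhat →
      I.artists = I'.artists →
      (∀ i ∈ I.users, ∀ j ∈ I.artists, I.w i j = I'.w i j) →
      ∀ Chat ⊆ I.artists,
        (∑ j ∈ Chat, φ I' j) - (∑ j ∈ Chat, φ I j) ≤ 1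

open Classical in
/-- The number of users whose engagement vectors differ between two instances
(on the same user and artist sets). -/
noncomputable def bribedCount (I I' : Inst) : ℕ :=
  (I.users.filter (fun i => ∃ j ∈ I.artists, I.w i j ≠ I'.w i j)).card

/-- Bribery-proofness, relative to a class `P` of instances: for instances `I, I'` on the
same users and artists whose engagement vectors differ for exactly `k` users, and any
coalition `Ĉ ⊆ C`, the gain `φ_{I'}(Ĉ) − φ_I(Ĉ)` is at most `k`. -/
def BriberyProofOn (P : Inst → Prop) (φ : Inst → ℕ → ℝ) : Prop :=
  ∀ I I' : Inst, P I → P I' →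
    I.users = I'.users → I.artists = I'.artists →
    ∀ Chat ⊆ I.artists,
      (∑ j ∈ Chat, φ I' j) - (∑ j ∈ Chat, φ I j) ≤ (bribedCount I I' : ℝ)

/-- Bribery-proofness. -/
abbrev BriberyProof (φ : Inst → ℕ → ℝ) : Prop := BriberyProofOn (fun _ => True) φ

/-- Single-user bribery-proofness: bribery-proofness restricted to `k = 1`. -/
def SingleBriberyProof (φ : Inst → ℕ → ℝ) : Prop :=
  ∀ I I' : Inst,
    I.users = I'.users → I.artists = I'.artists →
    bribedCount I I' = 1 →
    ∀ Chat ⊆ I.artists,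
      (∑ j ∈ Chat, φ I' j) - (∑ j ∈ Chat, φ I j) ≤ 1

/-- Anonymity (relative to a class `P`): permuting the labels of the users does not
affect the payoffs of the artists. -/
def AnonymousOn (P : Inst → Prop) (φ : Inst → ℕ → ℝ) : Prop :=
  ∀ I I' : Inst, P I → P I' →
    I.users = I'.users → I.artists = I'.artists →
    ∀ σ : Equiv.Perm ℕ, (∀ i ∈ I.users, σ i ∈ I.users) →
      (∀ i ∈ I.users, ∀ j ∈ I.artists, I.w i j = I'.w (σ i) j) →
      ∀ j ∈ I.artists, φ I j = φ I' j

/-- Neutrality (relative to a class `P`): permuting the labels of the artists permutes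
their payoffs. -/
def NeutralOn (P : Inst → Prop) (φ : Inst → ℕ → ℝ) : Prop :=
  ∀ I I' : Inst, P I → P I' →
    I.users = I'.users → I.artists = I'.artists →
    ∀ σ : Equiv.Perm ℕ, (∀ j ∈ I.artists, σ j ∈ I.artists) →
      (∀ i ∈ I.users, ∀ j ∈ I.artists, I.w i j = I'.w i (σ j)) →
      ∀ j ∈ I.artists, φ I j = φ I' (σ j)

/-- Neutrality. -/
abbrev Neutral (φ : Inst → ℕ → ℝ) : Prop := NeutralOn (fun _ => True) φ

/-- No free-ridership (relative to a class `P`): an artist with zero total engagement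
receives zero payment. -/
def NoFreeRideOn (P : Inst → Prop) (φ : Inst → ℕ → ℝ) : Prop :=
  ∀ I : Inst, P I → ∀ j ∈ I.artists, (∑ i ∈ I.users, I.w i j) = 0 → φ I j = 0

/-- Sybil-proofness: artists outside `C*` cannot change their combined payoff by
splitting/merging (user-by-user engagement towards `C*` and user totals outside `C*`
are preserved). -/
def SybilProof (φ : Inst → ℕ → ℝ) : Prop :=
  ∀ I I' : Inst, I.users = I'.users → I.artists ⊆ I'.artists →
    ∀ Cstar ⊆ I.artists,
      (∀ i ∈ I.users, ∀ j ∈ Cstar, I.w i j = I'.w i j) →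
      (∀ i ∈ I.users, ∑ j ∈ I.artists \ Cstar, I.w i j = ∑ j ∈ I'.artists \ Cstar, I'.w i j) →
      ∑ j ∈ I.artists \ Cstar, φ I j = ∑ j ∈ I'.artists \ Cstar, φ I' j

/-- Strong Sybil-proofness: as Sybil-proofness, but only total engagements
(aggregated over users) are preserved. -/
def StrongSybilProof (φ : Inst → ℕ → ℝ) : Prop :=
  ∀ I I' : Inst, I.users = I'.users → I.artists ⊆ I'.artists →
    ∀ Cstar ⊆ I.artists,
      (∀ j ∈ Cstar, ∑ i ∈ I.users, I.w i j = ∑ i ∈ I'.users, I'.w i j) →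
      (∑ i ∈ I.users, ∑ j ∈ I.artists \ Cstar, I.w i j
        = ∑ i ∈ I'.users, ∑ j ∈ I'.artists \ Cstar, I'.w i j) →
      ∑ j ∈ I.artists \ Cstar, φ I j = ∑ j ∈ I'.artists \ Cstar, φ I' j

/-- Engagement monotonicity: if artist `j*`'s engagement weakly increases while every
other artist's engagement weakly decreases, then `j*`'s payoff does not decrease. -/
def EngagementMonotone (φ : Inst → ℕ → ℝ) : Prop :=
  ∀ I I' : Inst, I.users = I'.users → I.artists = I'.artists →
    ∀ jstar ∈ I.artists,
      (∀ i ∈ I.users, I.w i jstar ≤ I'.w i jstar) →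
      (∀ i ∈ I.users, ∀ j ∈ I.artists, j ≠ jstar → I'.w i j ≤ I.w i j) →
      φ I jstar ≤ φ I' jstar

/-- Pigou-Dalton consistency: transferring `δ > 0` of engagement with artist `j` from a
user `i` with more engagement to a user `i'` with less (keeping everything else fixed,
and not overshooting) does not decrease `j`'s payoff. -/
def PigouDalton (φ : Inst → ℕ → ℝ) : Prop :=
  ∀ I I' : Inst, I.users = I'.users → I.artists = I'.artists →
    ∀ i ∈ I.users, ∀ i' ∈ I.users, i ≠ i' →
      ∀ j ∈ I.artists, ∀ δ : ℝ,
        0 < δ → 0 < I.w i j - δ →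
        I'.w i j = I.w i j - δ →
        I'.w i' j = I.w i' j + δ →
        I'.w i' j ≤ I'.w i j →
        (∀ k ∈ I.users, ∀ j' ∈ I.artists, j' ≠ j → I.w k j' = I'.w k j') →
        (∀ k ∈ I.users, k ≠ i → k ≠ i' → I.w k j = I'.w k j) →
        φ I j ≤ φ I' j

/-- User-addition monotonicity: adding one new user (with an arbitrary engagement
vector) does not decrease any artist's payoff. -/
def UserAdditionMonotone (φ : Inst → ℕ → ℝ) : Prop :=
  ∀ I I' : Inst, I.artists = I'.artists →
    ∀ i₀ : ℕ, i₀ ∉ I.users → I'.users = insert i₀ I.users →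
      (∀ i ∈ I.users, ∀ j ∈ I.artists, I.w i j = I'.w i j) →
      ∀ j ∈ I.artists, φ I j ≤ φ I' j

/-- The single-user instance `I_i = ({i}, C, w_i)` extracted from an instance `I`. -/
def Inst.single (I : Inst) (i : ℕ) (hi : i ∈ I.users) : Inst where
  users := {i}
  artists := I.artists
  w := fun i' j => if i' = i then I.w i j else 0
  users_nonempty := Finset.singleton_nonempty i
  w_nonneg := by
    intro i' j
    split
    · exact I.w_nonneg i j
    · exact le_refl 0
  w_supp := by
    intro i' j h
    split at h
    · rename_i hii
      exact ⟨by simp [hii], (I.w_supp i j h).2⟩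
    · exact absurd rfl h
  w_pos := by
    intro i' hi'
    have h : i' = i := Finset.mem_singleton.mp hi'
    simpa [h] using I.w_pos i hi

/-- User-additivity: each artist's payoff is the sum of the payoffs they would obtain in
the single-user instances. -/
def UserAdditive (φ : Inst → ℕ → ℝ) : Prop :=
  ∀ I : Inst, ∀ j ∈ I.artists,
    φ I j = ∑ i ∈ I.users.attach, φ (I.single i.1 i.2) j

/-- The `GlobalProp` rule: artists are paid proportionally to their share of total
engagement on the platform. -/
noncomputable def globalProp (α : ℝ) (I : Inst) (j : ℕ) : ℝ :=
  α * I.users.card * (∑ i ∈ I.users, I.w i j) /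
    (∑ i ∈ I.users, ∑ j' ∈ I.artists, I.w i j')

/-- The `UserProp` rule: an `α` fraction of each user's fee is split proportionally to
that user's engagement. -/
noncomputable def userProp (α : ℝ) (I : Inst) (j : ℕ) : ℝ :=
  α * ∑ i ∈ I.users, (I.w i j / ∑ j' ∈ I.artists, I.w i j')

open Classical in
/-- The `UserEQ` rule: an `α` fraction of each user's fee is split equally among the
artists with which the user has positive engagement. -/
noncomputable def userEQ (α : ℝ) (I : Inst) (j : ℕ) : ℝ :=
  α * ∑ i ∈ I.users,
    ((if 0 < I.w i j then (1 : ℝ) else 0) /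
      ((I.artists.filter (fun j' => 0 < I.w i j')).card : ℝ))

/-- The `ScaledUserProp` rule, given a choice `γ I` of the scaling parameter for each
instance: user `i` contributes `min(γ·‖w_i‖₁, 1)`, split proportionally to `w_i`. -/
noncomputable def scaledUserProp (γ : Inst → ℝ) (I : Inst) (j : ℕ) : ℝ :=
  ∑ i ∈ I.users,
    (min (γ I * ∑ j' ∈ I.artists, I.w i j') 1 * (I.w i j / ∑ j' ∈ I.artists, I.w i j'))

/-! A Pigou-Dalton transfer only moves engagement with `j` between two users, so every
artist's total engagement, and with it every `GlobalProp` payment, is unchanged. -/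

theorem Finset.sum_eq_sum_of_add_eq_of_eqOn_compl_pair {ι M : Type*} [DecidableEq ι]
    [AddCommMonoid M] {s : Finset ι} {f g : ι → M} {a b : ι} (ha : a ∈ s) (hb : b ∈ s)
    (hab : a ≠ b) (hfg : f a + f b = g a + g b) (heq : ∀ k ∈ s, k ≠ a → k ≠ b → f k = g k) :
    ∑ k ∈ s, f k = ∑ k ∈ s, g k := by
  have hb' : b ∈ s.erase a := mem_erase.2 ⟨hab.symm, hb⟩
  rw [← add_sum_erase s f ha, ← add_sum_erase _ f hb', ← add_sum_erase s g ha,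
    ← add_sum_erase _ g hb', ← add_assoc, ← add_assoc, hfg]
  congr 1
  refine sum_congr rfl fun k hk => ?_
  obtain ⟨hkb, hk⟩ := mem_erase.1 hk
  obtain ⟨hka, hk⟩ := mem_erase.1 hk
  exact heq k hk hka hkb

theorem globalProp_eq_of_sum_w_eq (α : ℝ) {I I' : Inst} (hU : I.users = I'.users)
    (hA : I.artists = I'.artists)
    (hcol : ∀ j ∈ I.artists, ∑ i ∈ I.users, I.w i j = ∑ i ∈ I'.users, I'.w i j)
    {j : ℕ} (hj : j ∈ I.artists) : globalProp α I j = globalProp α I' j := by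
  have htotal : ∑ i ∈ I.users, ∑ j' ∈ I.artists, I.w i j'
      = ∑ i ∈ I'.users, ∑ j' ∈ I'.artists, I'.w i j' := by
    rw [sum_comm, sum_comm (s := I'.users), ← hA]
    exact sum_congr rfl hcol
  rw [globalProp, globalProp, hcol j hj, htotal, hU]

theorem stmt9_general (α : ℝ) :
    PigouDalton (globalProp α) := by
  intro I I' hU hA i hi i' hi' hii' j hj δ _ _ hwi hwi' _ hother hsame
  refine le_of_eq (globalProp_eq_of_sum_w_eq α hU hA (fun j' hj' => ?_) hj)
  rw [← hU]
  by_cases hj'j : j' = j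
  · subst hj'j
    exact sum_eq_sum_of_add_eq_of_eqOn_compl_pair hi hi' hii' (by rw [hwi, hwi']; ring) hsame
  · exact sum_congr rfl fun k hk => hother k hk j' hj' hj'j

theorem stmt9 (α : ℝ) (hα : α ∈ Set.Ioc (0 : ℝ) 1) :
    PigouDalton (globalProp α) :=
  stmt9_general α
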